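/- Let (û, ŵ, v̂, ẑ) be a fixed point of the GBPDNA iteration and let (uⁿ, wⁿ, vⁿ, zⁿ) be generated by one step of the iteration. Then ‖w^{n+1} − ŵ‖² ≤ ‖wⁿ − ŵ‖² − ‖w^{n+1} − wⁿ‖² + ‖Aᵀ(w^{n+1} − ŵ)‖² + ‖Aᵀ(w^{n+1} − wⁿ)‖² − ‖Aᵀ(wⁿ − ŵ)‖² − 2⟨ŵ − w^{n+1}, A(u^{n+1} − û)⟩. -/

import Mathlib

open scoped RealInnerProductSpace
open Filter Topology

/-- Componentwise projection `P_λ` on `(ℝ^d)^p`. -/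
noncomputable def Pproj {d p : ℕ} (lam : ℝ)
    (w : PiLp 2 (fun _ : Fin p => EuclideanSpace ℝ (Fin d))) :
    PiLp 2 (fun _ : Fin p => EuclideanSpace ℝ (Fin d)) :=
  WithLp.toLp 2 (fun i => if lam < ‖w i‖ then (lam / ‖w i‖) • w i else w i)

/-- Projection onto the closed `ℓ₂`-ball of radius `ε` centered at `y`. -/
noncomputable def Qproj {m : ℕ} (y : EuclideanSpace ℝ (Fin m)) (eps : ℝ)
    (v : EuclideanSpace ℝ (Fin m)) : EuclideanSpace ℝ (Fin m) :=
  if eps < ‖v - y‖ then y + (eps / ‖v - y‖) • (v - y) else v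

/-!
`P_μ` is the metric projection onto a product of closed balls, hence firmly nonexpansive:
`‖P a - P b‖² ≤ ⟪P a - P b, a - b⟫`. Apply this to `a = wⁿ + A ū^{n+1}` and `b = ŵ + A û`.
Since `ū^{n+1} - u^{n+1} = Aᵀ(w^{n+1} - wⁿ)`, the right-hand side splits as
`⟪w^{n+1} - ŵ, wⁿ - ŵ⟫ + ⟪w^{n+1} - ŵ, A(u^{n+1} - û)⟫ + ⟪Aᵀ(w^{n+1} - ŵ), Aᵀ(w^{n+1} - wⁿ)⟫`,
and polarizing the first and last inner products gives the estimate.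
-/

section FirmlyNonexpansive

variable {E : Type*} [NormedAddCommGroup E] [InnerProductSpace ℝ E]

theorem norm_sub_sq_le_inner_of_variational {S : Set E} {P : E → E} (hmaps : ∀ x, P x ∈ S)
    (hvar : ∀ x, ∀ s ∈ S, ⟪x - P x, s - P x⟫ ≤ 0) (a b : E) :
    ‖P a - P b‖ ^ 2 ≤ ⟪P a - P b, a - b⟫ := by
  have ha := hvar a (P b) (hmaps b)
  have hb := hvar b (P a) (hmaps a)
  have hsplit : ⟪P a - P b, a - b⟫ - ‖P a - P b‖ ^ 2
      = -⟪a - P a, P b - P a⟫ - ⟪b - P b, P a - P b⟫ := by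
    rw [← real_inner_self_eq_norm_sq]
    simp only [inner_sub_left, inner_sub_right, real_inner_comm a, real_inner_comm b,
      real_inner_comm (P a) (P b)]
    ring
  linarith

noncomputable def ballProj (mu : ℝ) (x : E) : E :=
  if mu < ‖x‖ then (mu / ‖x‖) • x else x

theorem norm_ballProj_le {mu : ℝ} (hmu : 0 ≤ mu) (x : E) : ‖ballProj mu x‖ ≤ mu := by
  unfold ballProj
  split_ifs with h
  · have hx : 0 < ‖x‖ := hmu.trans_lt h
    rw [norm_smul, Real.norm_eq_abs, abs_of_nonneg (by positivity), div_mul_cancel₀ _ hx.ne']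
  · exact not_lt.1 h

theorem inner_sub_ballProj_sub_ballProj_nonpos {mu : ℝ} (hmu : 0 ≤ mu) (x s : E)
    (hs : ‖s‖ ≤ mu) : ⟪x - ballProj mu x, s - ballProj mu x⟫ ≤ 0 := by
  unfold ballProj
  split_ifs with h
  · have hx : 0 < ‖x‖ := hmu.trans_lt h
    have hres : x - (mu / ‖x‖) • x = ((‖x‖ - mu) / ‖x‖) • x := by
      rw [sub_div, div_self hx.ne', sub_smul, one_smul]
    have hxs : ⟪x, s⟫ ≤ mu * ‖x‖ :=
      (real_inner_le_norm x s).trans (by rw [mul_comm]; gcongr)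
    have hxx : ⟪x, (mu / ‖x‖) • x⟫ = mu * ‖x‖ := by
      rw [real_inner_smul_right, real_inner_self_eq_norm_sq]
      field_simp
    rw [hres, real_inner_smul_left, inner_sub_right, hxx]
    exact mul_nonpos_of_nonneg_of_nonpos (div_nonneg (by linarith) hx.le) (by linarith)
  · simp

theorem norm_ballProj_sub_sq_le_inner {mu : ℝ} (hmu : 0 ≤ mu) (a b : E) :
    ‖ballProj mu a - ballProj mu b‖ ^ 2 ≤ ⟪ballProj mu a - ballProj mu b, a - b⟫ :=
  norm_sub_sq_le_inner_of_variational (S := Metric.closedBall 0 mu)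
    (fun x => mem_closedBall_zero_iff.2 (norm_ballProj_le hmu x))
    (fun x s hs => inner_sub_ballProj_sub_ballProj_nonpos hmu x s (mem_closedBall_zero_iff.1 hs))
    a b

end FirmlyNonexpansive

theorem Pproj_apply {d p : ℕ} (mu : ℝ) (w : PiLp 2 (fun _ : Fin p => EuclideanSpace ℝ (Fin d)))
    (i : Fin p) : Pproj mu w i = ballProj mu (w i) := rfl

theorem norm_Pproj_sub_sq_le_inner {d p : ℕ} {mu : ℝ} (hmu : 0 ≤ mu)
    (a b : PiLp 2 (fun _ : Fin p => EuclideanSpace ℝ (Fin d))) :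
    ‖Pproj mu a - Pproj mu b‖ ^ 2 ≤ ⟪Pproj mu a - Pproj mu b, a - b⟫ := by
  rw [← real_inner_self_eq_norm_sq, PiLp.inner_apply, PiLp.inner_apply]
  refine Finset.sum_le_sum fun i _ => ?_
  simp only [PiLp.sub_apply, Pproj_apply, real_inner_self_eq_norm_sq]
  exact norm_ballProj_sub_sq_le_inner hmu (a i) (b i)

theorem norm_sub_sq_le_of_firmlyNonexpansive {E F : Type*}
    [NormedAddCommGroup E] [InnerProductSpace ℝ E] [CompleteSpace E]
    [NormedAddCommGroup F] [InnerProductSpace ℝ F] [CompleteSpace F]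
    (A : E →L[ℝ] F) {P : F → F} (hP : ∀ a b, ‖P a - P b‖ ^ 2 ≤ ⟪P a - P b, a - b⟫)
    {u ubar uh : E} {w w' wh : F} (hw' : w' = P (w + A ubar)) (hwh : wh = P (wh + A uh))
    (hubar : ubar = u + A.adjoint (w' - w)) :
    ‖w' - wh‖ ^ 2 ≤
      ‖w - wh‖ ^ 2 - ‖w' - w‖ ^ 2 + ‖A.adjoint (w' - wh)‖ ^ 2
        + ‖A.adjoint (w' - w)‖ ^ 2 - ‖A.adjoint (w - wh)‖ ^ 2
        - 2 * ⟪wh - w', A (u - uh)⟫ := by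
  have hfirm := hP (w + A ubar) (wh + A uh)
  rw [← hw', ← hwh] at hfirm
  have hsplit : ⟪w' - wh, w + A ubar - (wh + A uh)⟫
      = ⟪w' - wh, w - wh⟫ - ⟪wh - w', A (u - uh)⟫
        + ⟪A.adjoint (w' - wh), A.adjoint (w' - w)⟫ := by
    rw [ContinuousLinearMap.adjoint_inner_left, hubar]
    simp only [map_add, map_sub, inner_add_right, inner_sub_right, inner_sub_left]
    ring
  have hw : ‖w' - w‖ ^ 2 = ‖w' - wh‖ ^ 2 - 2 * ⟪w' - wh, w - wh⟫ + ‖w - wh‖ ^ 2 := by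
    rw [← norm_sub_sq_real, sub_sub_sub_cancel_right]
  have hAw : ‖A.adjoint (w - wh)‖ ^ 2 = ‖A.adjoint (w' - wh)‖ ^ 2
      - 2 * ⟪A.adjoint (w' - wh), A.adjoint (w' - w)⟫ + ‖A.adjoint (w' - w)‖ ^ 2 := by
    rw [← norm_sub_sq_real, ← map_sub, sub_sub_sub_cancel_left]
  linarith

theorem stmt15_general {N m p d : ℕ}
    (K : EuclideanSpace ℝ (Fin N) →L[ℝ] EuclideanSpace ℝ (Fin m))
    (A : EuclideanSpace ℝ (Fin N) →L[ℝ] PiLp 2 (fun _ : Fin p => EuclideanSpace ℝ (Fin d)))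
    (mu : ℝ) (hmu : 0 < mu)
    (un ubarnp1 unp1 : EuclideanSpace ℝ (Fin N))
    (wn wnp1 : PiLp 2 (fun _ : Fin p => EuclideanSpace ℝ (Fin d)))
    (vn zn : EuclideanSpace ℝ (Fin m))
    (hubar : ubarnp1 = un - K.adjoint (vn + K un - zn) - A.adjoint wn)
    (hw : wnp1 = Pproj mu (wn + A ubarnp1))
    (hu : unp1 = un - K.adjoint (vn + K un - zn) - A.adjoint wnp1)
    (uh : EuclideanSpace ℝ (Fin N))
    (wh : PiLp 2 (fun _ : Fin p => EuclideanSpace ℝ (Fin d)))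
    (hfw : wh = Pproj mu (wh + A uh))
    :
    ‖wnp1 - wh‖ ^ 2 ≤
      ‖wn - wh‖ ^ 2 - ‖wnp1 - wn‖ ^ 2 + ‖A.adjoint (wnp1 - wh)‖ ^ 2
        + ‖A.adjoint (wnp1 - wn)‖ ^ 2 - ‖A.adjoint (wn - wh)‖ ^ 2
        - 2 * ⟪wh - wnp1, A (unp1 - uh)⟫ := by
  have hubar' : ubarnp1 = unp1 + A.adjoint (wnp1 - wn) := by
    rw [hubar, hu, map_sub A.adjoint]
    abel
  exact norm_sub_sq_le_of_firmlyNonexpansive A (norm_Pproj_sub_sq_le_inner hmu.le) hw hfw hubar'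

/-- One-step estimate for the  07:07:30 up 9 min,  0 user,  load average: 0.33, 0.17, 0.07
USER     TTY      FROM             LOGIN@   IDLE   JCPU   PCPU WHAT-variable (inequality (tempw) of the paper). -/
theorem stmt15 {N m p d : ℕ}
    (K : EuclideanSpace ℝ (Fin N) →L[ℝ] EuclideanSpace ℝ (Fin m))
    (A : EuclideanSpace ℝ (Fin N) →L[ℝ] PiLp 2 (fun _ : Fin p => EuclideanSpace ℝ (Fin d)))
    (hK : ‖K‖ < 1) (hA : ‖A‖ < 1)
    (y : EuclideanSpace ℝ (Fin m)) (eps : ℝ) (heps : 0 ≤ eps) (mu : ℝ) (hmu : 0 < mu)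
    (θ : ℝ) (hθ0 : 0 < θ) (hθ1 : θ ≤ 1)
    (un ubarnp1 unp1 : EuclideanSpace ℝ (Fin N))
    (wn wnp1 : PiLp 2 (fun _ : Fin p => EuclideanSpace ℝ (Fin d)))
    (vn vnp1 zn znp1 : EuclideanSpace ℝ (Fin m))
    (hubar : ubarnp1 = un - K.adjoint (vn + K un - zn) - A.adjoint wn)
    (hw : wnp1 = Pproj mu (wn + A ubarnp1))
    (hu : unp1 = un - K.adjoint (vn + K un - zn) - A.adjoint wnp1)
    (hz : znp1 = Qproj y eps (K unp1 + vn))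
    (hv : vnp1 = vn + θ • (K unp1 - znp1))
    (uh : EuclideanSpace ℝ (Fin N))
    (wh : PiLp 2 (fun _ : Fin p => EuclideanSpace ℝ (Fin d)))
    (vh zh : EuclideanSpace ℝ (Fin m))
    (hfw : wh = Pproj mu (wh + A uh))
    (hfu : K.adjoint (vh + K uh - zh) + A.adjoint wh = 0)
    (hfz : zh = Qproj y eps (K uh + vh))
    (hfv : K uh = zh)
    :
    ‖wnp1 - wh‖ ^ 2 ≤
      ‖wn - wh‖ ^ 2 - ‖wnp1 - wn‖ ^ 2 + ‖A.adjoint (wnp1 - wh)‖ ^ 2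
        + ‖A.adjoint (wnp1 - wn)‖ ^ 2 - ‖A.adjoint (wn - wh)‖ ^ 2
        - 2 * ⟪wh - wnp1, A (unp1 - uh)⟫ :=
  stmt15_general K A mu hmu un ubarnp1 unp1 wn wnp1 vn zn hubar hw hu uh wh hfw
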